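/- For the extended map L(x, y, z) = (y + η, ∇V(y) − x, z − ⟨x,y⟩ + V(y)), writing (X, Y, Z) = L(x, y, z), one has dZ = ⟨Y, dX⟩ along any curve on which dz = ⟨y, dx⟩; that is, L preserves the contact-type one-form dz − ⟨y, dx⟩. -/

import Mathlib

open RealInnerProductSpace

noncomputable abbrev Esp (n : ℕ) := EuclideanSpace ℝ (Fin n)

/-- The extended map `L(x, y, z) = (y + η, ∇V(y) − x, z − ⟨x,y⟩ + V(y))`
preserves the contact-type one-form `dz − Σ yᵢ dxᵢ`: along any smooth curve
`(x(t), y(t), z(t))` with `dz/dt = ⟨y(t), dx/dt⟩`, the image curve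
`(X(t), Y(t), Z(t)) = L(x(t), y(t), z(t))` satisfies `dZ/dt = ⟨Y(t), dX/dt⟩`. -/
theorem henonContact_preserves_contact_form {n : ℕ}
    (V : Esp n → ℝ) (η : Esp n) (hV : ContDiff ℝ (⊤ : ℕ∞) V)
    (x y : ℝ → Esp n) (z : ℝ → ℝ)
    (hx : Differentiable ℝ x) (hy : Differentiable ℝ y) (hz : Differentiable ℝ z)
    (hcontact : ∀ t : ℝ, deriv z t = ⟪y t, deriv x t⟫)
    (X Y : ℝ → Esp n) (Z : ℝ → ℝ)
    (hX : ∀ t, X t = y t + η)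
    (hY : ∀ t, Y t = gradient V (y t) - x t)
    (hZ : ∀ t, Z t = z t - ⟪x t, y t⟫ + V (y t)) :
    ∀ t : ℝ, deriv Z t = ⟪Y t, deriv X t⟫ := by
  intro t
  have hx' : HasDerivAt x (deriv x t) t := (hx t).hasDerivAt
  have hy' : HasDerivAt y (deriv y t) t := (hy t).hasDerivAt
  have hz' : HasDerivAt z (deriv z t) t := (hz t).hasDerivAt
  have hVd : DifferentiableAt ℝ V (y t) := (hV.differentiable (by simp)).differentiableAt
  have hgrad : HasGradientAt V (gradient V (y t)) (y t) := hVd.hasGradientAt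
  have hVy : HasDerivAt (fun s => V (y s)) ⟪gradient V (y t), deriv y t⟫ t := by
    have := hgrad.hasFDerivAt.comp_hasDerivAt t hy'
    exact this.congr_deriv (by simp)
  have hinner : HasDerivAt (fun s => ⟪x s, y s⟫)
      (⟪x t, deriv y t⟫ + ⟪deriv x t, y t⟫) t := hx'.inner ℝ hy'
  have hXd : HasDerivAt X (deriv y t) t := by
    have : HasDerivAt (fun s => y s + η) (deriv y t) t := hy'.add_const η
    exact this.congr_of_eventuallyEq (Filter.Eventually.of_forall fun s => (hX s))
  have hZd : HasDerivAt Z (deriv z t - (⟪x t, deriv y t⟫ + ⟪deriv x t, y t⟫)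
      + ⟪gradient V (y t), deriv y t⟫) t := by
    have : HasDerivAt (fun s => z s - ⟪x s, y s⟫ + V (y s)) _ t :=
      (hz'.sub hinner).add hVy
    exact this.congr_of_eventuallyEq (Filter.Eventually.of_forall fun s => (hZ s))
  rw [hZd.deriv, hXd.deriv, hY t, hcontact t, real_inner_comm (y t) (deriv x t),
    inner_sub_left]
  ring
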